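/- Let $r \geq 1$ be an integer, let $w > 0$ and $s, n, e$ be real numbers, and suppose $e < -\left| n + (r-1)\frac{s^2}{2w} \right|$. Let $m \geq 1$ be an integer and let $k_1, \dots, k_m$ be positive integers with $k_1 + \cdots + k_m = r$. Suppose $f_1, \dots, f_m$ and $g_1, \dots, g_m$ are real numbers satisfying, for every $i$: $f_i^2 \leq \frac{(s \cdot k_i / r)^2}{w}$ and $g_i \leq \frac{f_i^2}{2 k_i}$, and additionally $\sum_{i=1}^m g_i \geq -n$. Then $g_i > e$ for every $i = 1, \dots, m$. -/

import Mathlib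

/-!
Bounding every other summand by its Hodge–Bogomolov maximum `s² kⱼ / (2 w r²)`, the
constraint `∑ gⱼ ≥ -n` forces `gᵢ ≥ -n - s² (r - kᵢ) / (2 w r²) ≥ -n - (r - 1) s² / (2 w)`,
and the hypothesis on `e` puts `e` strictly below this.
-/

lemma le_div_sq_mul_of_hodge_bogomolov {r k w s f g : ℝ} (hk : 0 < k)
    (hf : f ^ 2 ≤ (s * k / r) ^ 2 / w) (hg : g ≤ f ^ 2 / (2 * k)) :
    g ≤ s ^ 2 / (2 * w) / r ^ 2 * k := by
  calc g ≤ f ^ 2 / (2 * k) := hg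
    _ ≤ (s * k / r) ^ 2 / w / (2 * k) := by gcongr
    _ = s ^ 2 / (2 * w) / r ^ 2 * k := by field_simp

lemma neg_sub_mul_le_of_le_mul {ι : Type*} [Fintype ι] {g k : ι → ℝ} {c n : ℝ}
    (hg : ∀ j, g j ≤ c * k j) (hsum : -n ≤ ∑ j, g j) (i : ι) :
    -n - c * (∑ j, k j - k i) ≤ g i := by
  have slack : c * k i - g i ≤ ∑ j, (c * k j - g j) :=
    Finset.single_le_sum (fun j _ => sub_nonneg.mpr (hg j)) (Finset.mem_univ i)
  rw [Finset.sum_sub_distrib, ← Finset.mul_sum] at slack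
  linarith

lemma div_sq_mul_sub_le_sub_one_mul {a r k : ℝ} (ha : 0 ≤ a) (hk : 1 ≤ k) (hr : 1 ≤ r) :
    a / r ^ 2 * (r - k) ≤ (r - 1) * a := by
  calc a / r ^ 2 * (r - k) ≤ a / r ^ 2 * (r - 1) := by gcongr
    _ ≤ a * (r - 1) := by
        gcongr
        exact div_le_self ha (one_le_pow₀ hr)
    _ = (r - 1) * a := mul_comm _ _

theorem stmt0_general (r : ℕ) (hr : 1 ≤ r) (w s n e : ℝ) (hw : 0 < w)
    (he : e < -|n + ((r : ℝ) - 1) * s ^ 2 / (2 * w)|)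
    (m : ℕ) (k : Fin m → ℕ) (hk : ∀ i, 0 < k i)
    (hsum : ∑ i, k i = r)
    (f g : Fin m → ℝ)
    (hf : ∀ i, (f i) ^ 2 ≤ (s * (k i : ℝ) / (r : ℝ)) ^ 2 / w)
    (hg : ∀ i, g i ≤ (f i) ^ 2 / (2 * (k i : ℝ)))
    (hgsum : -n ≤ ∑ i, g i) :
    ∀ i, e < g i := by
  intro i
  have hg' : ∀ j, g j ≤ s ^ 2 / (2 * w) / (r : ℝ) ^ 2 * k j := fun j =>
    le_div_sq_mul_of_hodge_bogomolov (by exact_mod_cast hk j) (hf j) (hg j)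
  have hgi := neg_sub_mul_le_of_le_mul hg' hgsum i
  have hsumR : ∑ j, (k j : ℝ) = r := by exact_mod_cast hsum
  have herr : s ^ 2 / (2 * w) / (r : ℝ) ^ 2 * (r - k i) ≤ (r - 1) * (s ^ 2 / (2 * w)) :=
    div_sq_mul_sub_le_sub_one_mul (by positivity) (by exact_mod_cast hk i)
      (by exact_mod_cast hr)
  rw [hsumR] at hgi
  rw [mul_div_assoc] at he
  linarith [le_abs_self (n + ((r : ℝ) - 1) * (s ^ 2 / (2 * w)))]

/-- Lemma 2.3(ii) of the paper (full numerical content): under the hypothesis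
`e < -|n + (r-1) s^2/(2w)|`, with ranks `k i` summing to `r`, Hodge-index bounds
`(f i)^2 ≤ (s * k i / r)^2 / w`, Bogomolov bounds `g i ≤ (f i)^2 / (2 * k i)`,
and `∑ g i ≥ -n`, one has `g i > e` for every `i`. -/
theorem stmt0 (r : ℕ) (hr : 1 ≤ r) (w s n e : ℝ) (hw : 0 < w)
    (he : e < -|n + ((r : ℝ) - 1) * s ^ 2 / (2 * w)|)
    (m : ℕ) (hm : 1 ≤ m) (k : Fin m → ℕ) (hk : ∀ i, 0 < k i)
    (hsum : ∑ i, k i = r)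
    (f g : Fin m → ℝ)
    (hf : ∀ i, (f i) ^ 2 ≤ (s * (k i : ℝ) / (r : ℝ)) ^ 2 / w)
    (hg : ∀ i, g i ≤ (f i) ^ 2 / (2 * (k i : ℝ)))
    (hgsum : -n ≤ ∑ i, g i) :
    ∀ i, e < g i :=
  stmt0_general r hr w s n e hw he m k hk hsum f g hf hg hgsum
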